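/- In the exploration process of the DC-PPM, suppose the vertex u currently being explored has type x, and let D be the number of neighbours u has in the unexplored set U(m). Then, conditionally on D = d, the types of these d neighbours are i.i.d. with law μ*^(m)_x given by dμ*^(m)_x(y) = κ(x,y)·dμ^(m)(y) / ∫_S κ(x,z) dμ^(m)(z). Moreover, with N_m as in the reservoir lemma, for all n ≥ N_m the total variation distance between μ*^(m)_x and μ*_x satisfies ||μ*^(m)_x - μ*_x||_TV ≤ 4·(κ_max³/κ_min²)·(m/n). -/

import Mathlib

noncomputable section

/-- The kernel `κ(x,y) = |xy|·(a·1{xy>0} + b·1{xy<0})` on the type space `S = (-W) ∪ W`. -/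
def kfun (a b : ℝ) (x y : ℝ) : ℝ := |x * y| * (if 0 < x * y then a else b)

/-- `κ_max`, the maximum of `κ` on `S × S` when `W ⊆ [φmin, φmax]`. -/
def kfunMax (a b φmax : ℝ) : ℝ := max a b * φmax ^ 2

/-- `κ_min`, the minimum of `κ` on `S × S` when `W ⊆ [φmin, φmax]`. -/
def kfunMin (a b φmin : ℝ) : ℝ := min a b * φmin ^ 2

/-- The law `μ` of a type `x = σφ`: `μ(A) = ∫_A (1/2) dν(|x|)`. -/
def typeLaw (ν : MeasureTheory.Measure ℝ) : MeasureTheory.Measure ℝ :=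
  (2 : ENNReal)⁻¹ • (ν.map (fun x => -x) + ν)

/-- Normalization of a finite nonzero measure to a probability measure. -/
def mnormalize (μ : MeasureTheory.Measure ℝ) : MeasureTheory.Measure ℝ :=
  (μ Set.univ)⁻¹ • μ

/-- The law `μ^{(m)} = μ^{(m)}_{x_1,…,x_m}` of the types of unexplored vertices after the
vertices of types `x_1, …, x_m` have been explored:
`dμ^{(m)}(y) ∝ ∏_{i=1}^m (1 - κ(x_i,y)/n) · dμ(y)`. -/
def muExplored (a b : ℝ) (ν : MeasureTheory.Measure ℝ) (n m : ℕ) (x : Fin m → ℝ) :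
    MeasureTheory.Measure ℝ :=
  mnormalize ((typeLaw ν).withDensity fun y =>
    ENNReal.ofReal (∏ i : Fin m, (1 - kfun a b (x i) y / n)))

/-- The size-biased kernel law `dμ*_x(y) ∝ κ(x,y)·dμ(y)` associated to a base law `μ`. -/
def kernelBiased (a b : ℝ) (μ : MeasureTheory.Measure ℝ) (x : ℝ) : MeasureTheory.Measure ℝ :=
  mnormalize (μ.withDensity fun y => ENNReal.ofReal (kfun a b x y))

/-- `λ_x(S) = ∫_S κ(x,y) dμ(y)`. -/
def lamTotal (a b : ℝ) (ν : MeasureTheory.Measure ℝ) (x : ℝ) : ℝ :=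
  ∫ y, kfun a b x y ∂(typeLaw ν)

open MeasureTheory ProbabilityTheory Filter Topology

/-!
Each unexplored vertex `j` contributes an independent pair `(Y j, e j)` (its type and whether it
is a neighbour of `u`), and on `{e j}` the law of `Y j` is the sub-probability
`η = κ(x_u, ·)/n · μ^{(m)}`. Splitting `{D = d}` according to the exact set of neighbours, the
Laplace functional factorizes over independent pairs:
`E[∏_{j ∼ u} g(Y j); D = d] = C(k, d) (∫ g dη)^d (1 - η(S))^{k - d}`. Dividing by `P(D = d)` (the
case `g = 1`) leaves `(∫ g dη / η(S))^d`, the Laplace functional of `d` i.i.d. samples of the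
normalization of `η`, which is `μ*^{(m)}_{x_u}`.

For the distance bound, `μ*^{(m)}_x` has density proportional to `ρ κ(x, ·)` against `μ`, where
`ρ(y) = ∏ᵢ (1 - κ(xᵢ, y)/n) ∈ [1 - mκ_max/n, 1]`. In the ratios `∫_A ρκ / ∫ ρκ` and
`∫_A κ / ∫ κ` numerators and denominators differ by at most `κ_max · mκ_max/n`, while the
denominators are at least `κ_min/2` and `κ_min`; this gives `4 (κ_max³/κ_min²)(m/n)`.
-/

open scoped ENNReal

lemma prod_one_sub_mem_Icc {ι : Type*} {s : Finset ι} {t : ι → ℝ} {c : ℝ}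
    (ht : ∀ i ∈ s, t i ∈ Set.Icc 0 c) (hc : c ≤ 1) :
    ∏ i ∈ s, (1 - t i) ∈ Set.Icc ((1 - c) ^ s.card) 1 := by
  refine ⟨?_, Finset.prod_le_one (fun i hi => sub_nonneg.2 ((ht i hi).2.trans hc))
    (fun i hi => sub_le_self 1 (ht i hi).1)⟩
  rw [← Finset.prod_const]
  exact Finset.prod_le_prod (fun _ _ => sub_nonneg.2 hc) (fun i hi => sub_le_sub_left (ht i hi).2 1)

lemma abs_div_sub_div_le {i iA j jA km kM δ : ℝ} (hkm : 0 < km) (hi : i ∈ Set.Icc km kM)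
    (hiA : |iA| ≤ kM) (hj : km / 2 ≤ j) (hjA : |jA - iA| ≤ δ) (hji : |j - i| ≤ δ) :
    |jA / j - iA / i| ≤ 4 * kM * δ / km ^ 2 := by
  have hi0 : 0 < i := hkm.trans_le hi.1
  have hj0 : 0 < j := by linarith
  have hδ : 0 ≤ δ := (abs_nonneg _).trans hjA
  have hnum : |jA * i - j * iA| ≤ 2 * kM * δ := calc
    |jA * i - j * iA| = |(jA - iA) * i - iA * (j - i)| := by ring_nf
    _ ≤ |jA - iA| * |i| + |iA| * |j - i| := by rw [← abs_mul, ← abs_mul]; exact abs_sub _ _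
    _ ≤ δ * kM + kM * δ := by
      rw [abs_of_pos hi0]
      exact add_le_add (mul_le_mul hjA hi.2 hi0.le hδ)
        (mul_le_mul hiA hji (abs_nonneg _) ((abs_nonneg _).trans hiA))
    _ = 2 * kM * δ := by ring
  have hden : km ^ 2 / 2 ≤ j * i := by nlinarith [hi.1]
  rw [div_sub_div _ _ hj0.ne' hi0.ne', abs_div, abs_of_pos (mul_pos hj0 hi0)]
  calc |jA * i - j * iA| / (j * i) ≤ 2 * kM * δ / (km ^ 2 / 2) :=
        div_le_div₀ (mul_nonneg (by linarith [hi.1, hi.2]) hδ) hnum (by positivity) hden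
    _ = 4 * kM * δ / km ^ 2 := by field_simp; ring

lemma abs_setIntegral_le_of_ae_abs_le {α : Type*} [MeasurableSpace α] {μ : Measure α}
    [IsProbabilityMeasure μ] {f : α → ℝ} {C : ℝ} (hf : ∀ᵐ y ∂μ, |f y| ≤ C) (B : Set α) :
    |∫ y in B, f y ∂μ| ≤ C := by
  obtain ⟨y, hy⟩ := hf.exists
  have hnorm : ∀ᵐ y ∂μ.restrict B, ‖f y‖ ≤ C :=
    ae_restrict_of_ae (hf.mono fun y h => (Real.norm_eq_abs _).trans_le h)
  simpa using (norm_setIntegral_le_of_norm_le_const_ae (measure_lt_top μ B) hnorm).trans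
    (mul_le_of_le_one_right ((abs_nonneg _).trans hy) measureReal_le_one)

section Normalize

variable {μ : Measure ℝ}

lemma isProbabilityMeasure_mnormalize (h0 : μ Set.univ ≠ 0) (htop : μ Set.univ ≠ ∞) :
    IsProbabilityMeasure (mnormalize μ) :=
  ⟨ENNReal.inv_mul_cancel h0 htop⟩

lemma mnormalize_smul {c : ℝ≥0∞} (hc0 : c ≠ 0) (hctop : c ≠ ∞) :
    mnormalize (c • μ) = mnormalize μ := by
  rw [mnormalize, mnormalize, Measure.smul_apply, smul_smul, smul_eq_mul,
    ENNReal.mul_inv (.inl hc0) (.inl hctop), mul_right_comm, ENNReal.inv_mul_cancel hc0 hctop,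
    one_mul]

lemma mnormalize_absolutelyContinuous : mnormalize μ ≪ μ :=
  Measure.smul_absolutelyContinuous

lemma mnormalize_withDensity_apply_toReal {f : ℝ → ℝ} (hf : Integrable f μ) (hf0 : 0 ≤ᵐ[μ] f)
    {A : Set ℝ} (hA : MeasurableSet A) :
    (mnormalize (μ.withDensity fun y => ENNReal.ofReal (f y)) A).toReal
      = (∫ y in A, f y ∂μ) / ∫ y, f y ∂μ := by
  rw [mnormalize, Measure.smul_apply, withDensity_apply _ hA, withDensity_apply _ .univ,
    Measure.restrict_univ, ← ofReal_integral_eq_lintegral_ofReal hf hf0,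
    ← ofReal_integral_eq_lintegral_ofReal hf.restrict (ae_restrict_of_ae hf0), smul_eq_mul,
    ENNReal.toReal_mul, ENNReal.toReal_inv, ENNReal.toReal_ofReal (integral_nonneg_of_ae hf0),
    ENNReal.toReal_ofReal (integral_nonneg_of_ae (ae_restrict_of_ae hf0)), inv_mul_eq_div]

lemma withDensity_ofReal_univ_mem_Icc [IsProbabilityMeasure μ] {f : ℝ → ℝ} {c C : ℝ}
    (hf : ∀ᵐ y ∂μ, f y ∈ Set.Icc c C) :
    μ.withDensity (fun y => ENNReal.ofReal (f y)) Set.univ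
      ∈ Set.Icc (ENNReal.ofReal c) (ENNReal.ofReal C) := by
  rw [withDensity_apply _ .univ, Measure.restrict_univ]
  constructor
  · calc ENNReal.ofReal c = ∫⁻ _, ENNReal.ofReal c ∂μ := by simp
      _ ≤ _ := lintegral_mono_ae (hf.mono fun y hy => ENNReal.ofReal_le_ofReal hy.1)
  · calc _ ≤ ∫⁻ _, ENNReal.ofReal C ∂μ :=
          lintegral_mono_ae (hf.mono fun y hy => ENNReal.ofReal_le_ofReal hy.2)
      _ = ENNReal.ofReal C := by simp

lemma withDensity_ofReal_univ_ne_zero_and_ne_top [IsProbabilityMeasure μ] {f : ℝ → ℝ}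
    {c C : ℝ} (hc : 0 < c) (hf : ∀ᵐ y ∂μ, f y ∈ Set.Icc c C) :
    μ.withDensity (fun y => ENNReal.ofReal (f y)) Set.univ ≠ 0 ∧
      μ.withDensity (fun y => ENNReal.ofReal (f y)) Set.univ ≠ ∞ := by
  obtain ⟨hlow, hup⟩ := withDensity_ofReal_univ_mem_Icc hf
  exact ⟨((ENNReal.ofReal_pos.2 hc).trans_le hlow).ne',
    ne_top_of_le_ne_top ENNReal.ofReal_ne_top hup⟩

lemma mnormalize_withDensity_ofReal_div {f : ℝ → ℝ} (hf : Measurable f) {c : ℝ} (hc : 0 < c) :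
    mnormalize (μ.withDensity fun y => ENNReal.ofReal (f y / c))
      = mnormalize (μ.withDensity fun y => ENNReal.ofReal (f y)) := by
  have : (fun y => ENNReal.ofReal (f y / c))
      = (ENNReal.ofReal c)⁻¹ • fun y => ENNReal.ofReal (f y) := by
    ext y
    rw [ENNReal.ofReal_div_of_pos hc, Pi.smul_apply, smul_eq_mul, div_eq_mul_inv, mul_comm]
  rw [this, withDensity_smul _ hf.ennreal_ofReal, mnormalize_smul
    (ENNReal.inv_ne_zero.2 ENNReal.ofReal_ne_top) (ENNReal.inv_ne_top.2 (by simpa using hc))]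

lemma abs_mnormalize_withDensity_mul_sub_le [IsProbabilityMeasure μ]
    {κ ρ : ℝ → ℝ} (hκ : Measurable κ) (hρ : Measurable ρ) {km kM ε : ℝ} (hkm : 0 < km)
    (hε : ε ≤ 1 / 2) (hκb : ∀ᵐ y ∂μ, κ y ∈ Set.Icc km kM)
    (hρb : ∀ᵐ y ∂μ, ρ y ∈ Set.Icc (1 - ε) 1) {A : Set ℝ} (hA : MeasurableSet A) :
    |(mnormalize (μ.withDensity fun y => ENNReal.ofReal (ρ y * κ y)) A).toReal
        - (mnormalize (μ.withDensity fun y => ENNReal.ofReal (κ y)) A).toReal|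
      ≤ 4 * kM * (kM * ε) / km ^ 2 := by
  have hpt : ∀ᵐ y ∂μ, |κ y| ≤ kM ∧ |ρ y * κ y| ≤ kM ∧ |ρ y * κ y - κ y| ≤ kM * ε ∧
      km / 2 ≤ ρ y * κ y := by
    filter_upwards [hκb, hρb] with y ⟨hκ1, hκ2⟩ ⟨hρ1, hρ2⟩
    refine ⟨abs_le.2 ⟨by linarith, hκ2⟩, abs_le.2 ⟨by nlinarith, by nlinarith⟩,
      abs_le.2 ⟨by nlinarith, by nlinarith⟩, by nlinarith⟩
  have hκi : Integrable κ μ := Integrable.of_bound hκ.aestronglyMeasurable kM <|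
    hpt.mono fun y h => (Real.norm_eq_abs _).trans_le h.1
  have hρκi : Integrable (fun y => ρ y * κ y) μ :=
    Integrable.of_bound (hρ.mul hκ).aestronglyMeasurable kM <|
      hpt.mono fun y h => (Real.norm_eq_abs _).trans_le h.2.1
  have hdiff (B : Set ℝ) : |(∫ y in B, ρ y * κ y ∂μ) - ∫ y in B, κ y ∂μ| ≤ kM * ε := by
    rw [← integral_sub hρκi.integrableOn hκi.integrableOn]
    exact abs_setIntegral_le_of_ae_abs_le (hpt.mono fun y h => h.2.2.1) B
  have hI : ∫ y, κ y ∂μ ∈ Set.Icc km kM :=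
    ⟨by simpa using integral_mono_ae (integrable_const km) hκi (hκb.mono fun y hy => hy.1),
      by simpa using integral_mono_ae hκi (integrable_const kM) (hκb.mono fun y hy => hy.2)⟩
  have hJ : km / 2 ≤ ∫ y, ρ y * κ y ∂μ := by
    simpa using integral_mono_ae (integrable_const (km / 2)) hρκi (hpt.mono fun y h => h.2.2.2)
  have hρκ0 : 0 ≤ᵐ[μ] fun y => ρ y * κ y :=
    hpt.mono fun y h => show 0 ≤ ρ y * κ y by linarith [h.2.2.2]
  rw [mnormalize_withDensity_apply_toReal hρκi hρκ0 hA,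
    mnormalize_withDensity_apply_toReal hκi (hκb.mono fun y hy => hkm.le.trans hy.1) hA]
  exact abs_div_sub_div_le hkm hI (abs_setIntegral_le_of_ae_abs_le (hpt.mono fun y h => h.1) A)
    hJ (hdiff A) (by simpa using hdiff Set.univ)

end Normalize

section Thinning

variable {Ω α ι : Type*} [DecidableEq ι]

def selectWeight (g : α → ℝ≥0∞) (S : Finset ι) (j : ι) (p : α × Bool) : ℝ≥0∞ :=
  if j ∈ S then (if p.2 then g p.1 else 0) else (if p.2 then 0 else 1)

lemma prod_selectWeight [Fintype ι] (g : α → ℝ≥0∞) (S : Finset ι) (y : ι → α) (e : ι → Bool) :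
    ∏ j, selectWeight g S j (y j, e j)
      = if Finset.univ.filter (fun j => e j = true) = S then ∏ j ∈ S, g (y j) else 0 := by
  split_ifs with hS
  · subst hS
    refine (Finset.prod_congr rfl fun j _ => ?_).trans (Fintype.prod_ite_mem _ _)
    cases h : e j <;> simp [selectWeight, h]
  · obtain ⟨j, hj⟩ : ∃ j, ¬(e j = true ↔ j ∈ S) := by
      by_contra! h
      exact hS (Finset.ext fun j => by simpa using h j)
    refine Finset.prod_eq_zero (Finset.mem_univ j) ?_
    cases hej : e j <;> by_cases hjS : j ∈ S <;> simp_all [selectWeight]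

lemma measurableSet_card_filter_eq [MeasurableSpace Ω] [Fintype ι] {e : ι → Ω → Bool}
    (he : ∀ j, Measurable (e j)) (d : ℕ) :
    MeasurableSet {ω | (Finset.univ.filter fun j => e j ω = true).card = d} :=
  measurable_pi_lambda _ he
    (Set.to_countable
      {f : ι → Bool | (Finset.univ.filter fun j => f j = true).card = d}).measurableSet

variable [MeasurableSpace Ω] [MeasurableSpace α]

lemma measurable_selectWeight {g : α → ℝ≥0∞} (hg : Measurable g) (S : Finset ι) (j : ι) :
    Measurable (selectWeight g S j) := by
  have hsnd : MeasurableSet {p : α × Bool | p.2 = true} :=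
    measurable_snd (measurableSet_singleton true)
  unfold selectWeight
  split_ifs
  exacts [Measurable.ite hsnd (hg.comp measurable_fst) measurable_const,
    Measurable.ite hsnd measurable_const measurable_const]

variable {P : Measure Ω} [IsProbabilityMeasure P] {Y : ι → Ω → α} {e : ι → Ω → Bool}
  {η : Measure α} {g : α → ℝ≥0∞}

lemma lintegral_selectWeight (hY : ∀ j, Measurable (Y j)) (he : ∀ j, Measurable (e j))
    (hη : ∀ j, (P.restrict {ω | e j ω = true}).map (Y j) = η) (hg : Measurable g)
    (S : Finset ι) (j : ι) :
    ∫⁻ ω, selectWeight g S j (Y j ω, e j ω) ∂P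
      = if j ∈ S then ∫⁻ y, g y ∂η else 1 - η Set.univ := by
  have hej : MeasurableSet {ω | e j ω = true} := he j (measurableSet_singleton true)
  by_cases hjS : j ∈ S
  · have : (fun ω => selectWeight g S j (Y j ω, e j ω))
        = {ω | e j ω = true}.indicator fun ω => g (Y j ω) := by
      ext ω; cases h : e j ω <;> simp [selectWeight, hjS, h]
    rw [this, lintegral_indicator hej, ← hη j, lintegral_map hg (hY j), if_pos hjS]
  · have : (fun ω => selectWeight g S j (Y j ω, e j ω))
        = {ω | e j ω = true}ᶜ.indicator 1 := by
      ext ω; cases h : e j ω <;> simp [selectWeight, hjS, h]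
    rw [this, lintegral_indicator_one hej.compl, prob_compl_eq_one_sub hej, if_neg hjS, ← hη j,
      Measure.map_apply (hY j) .univ, Set.preimage_univ, Measure.restrict_apply_univ]

variable [Fintype ι]

lemma lintegral_indicator_card_eq (hY : ∀ j, Measurable (Y j)) (he : ∀ j, Measurable (e j))
    (hindep : iIndepFun (fun j ω => (Y j ω, e j ω)) P)
    (hη : ∀ j, (P.restrict {ω | e j ω = true}).map (Y j) = η) (hg : Measurable g) (d : ℕ) :
    ∫⁻ ω, {ω | (Finset.univ.filter fun j => e j ω = true).card = d}.indicator
        (fun ω => ∏ j ∈ Finset.univ.filter (fun j => e j ω = true), g (Y j ω)) ω ∂P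
      = (Fintype.card ι).choose d * (∫⁻ y, g y ∂η) ^ d
          * (1 - η Set.univ) ^ (Fintype.card ι - d) := by
  have hsum : ∀ ω, {ω | (Finset.univ.filter fun j => e j ω = true).card = d}.indicator
        (fun ω => ∏ j ∈ Finset.univ.filter (fun j => e j ω = true), g (Y j ω)) ω
      = ∑ S ∈ Finset.powersetCard d Finset.univ, ∏ j, selectWeight g S j (Y j ω, e j ω) := by
    intro ω
    simp only [prod_selectWeight, Finset.sum_ite_eq, Finset.mem_powersetCard,
      Finset.subset_univ, true_and, Set.indicator_apply, Set.mem_ofPred_eq]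
  have hmeas : ∀ S, Measurable fun ω => ∏ j, selectWeight g S j (Y j ω, e j ω) := fun S =>
    Finset.measurable_prod _ fun j _ => (measurable_selectWeight hg S j).comp ((hY j).prodMk (he j))
  have hterm : ∀ S ∈ Finset.powersetCard d Finset.univ,
      ∫⁻ ω, ∏ j, selectWeight g S j (Y j ω, e j ω) ∂P
        = (∫⁻ y, g y ∂η) ^ d * (1 - η Set.univ) ^ (Fintype.card ι - d) := by
    intro S hS
    rw [lintegral_prod_eq_prod_lintegral_of_indepFun Finset.univ
        (fun j ω => selectWeight g S j (Y j ω, e j ω))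
        (hindep.comp _ fun j => measurable_selectWeight hg S j)
        fun j => (measurable_selectWeight hg S j).comp ((hY j).prodMk (he j))]
    simp only [lintegral_selectWeight hY he hη hg, Finset.prod_ite,
      Finset.prod_const, Finset.filter_mem_eq_inter, Finset.univ_inter, Finset.filter_not,
      Finset.card_univ_sdiff, (Finset.mem_powersetCard.1 hS).2]
  rw [lintegral_congr hsum, lintegral_finsetSum _ fun S _ => hmeas S,
    Finset.sum_congr rfl hterm, Finset.sum_const, Finset.card_powersetCard, Finset.card_univ,
    nsmul_eq_mul, mul_assoc]

lemma lintegral_prod_cond_card_eq (hY : ∀ j, Measurable (Y j)) (he : ∀ j, Measurable (e j))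
    (hindep : iIndepFun (fun j ω => (Y j ω, e j ω)) P)
    (hη : ∀ j, (P.restrict {ω | e j ω = true}).map (Y j) = η)
    (hη1 : η Set.univ < 1) (hg : Measurable g) {d : ℕ} (hd : d ≤ Fintype.card ι) :
    ∫⁻ ω, ∏ j ∈ Finset.univ.filter (fun j => e j ω = true), g (Y j ω)
        ∂(P[|{ω | (Finset.univ.filter fun j => e j ω = true).card = d}])
      = (∫⁻ y, g y ∂((η Set.univ)⁻¹ • η)) ^ d := by
  have hD := measurableSet_card_filter_eq he d
  have hPD := lintegral_indicator_card_eq hY he hindep hη (measurable_const (a := 1)) d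
  simp only [Finset.prod_const_one, lintegral_indicator_const hD, one_mul, lintegral_one] at hPD
  rw [ProbabilityTheory.cond, lintegral_smul_measure, ← lintegral_indicator hD,
    lintegral_indicator_card_eq hY he hindep hη hg d, hPD, lintegral_smul_measure, smul_eq_mul,
    smul_eq_mul]
  set C : ℝ≥0∞ := ↑((Fintype.card ι).choose d)
  set w := (1 - η Set.univ) ^ (Fintype.card ι - d)
  have hCw0 : C * w ≠ 0 := mul_ne_zero (Nat.cast_ne_zero.2 (Nat.choose_pos hd).ne')
    (pow_ne_zero _ (tsub_pos_of_lt hη1).ne')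
  have hCwtop : C * w ≠ ∞ := ENNReal.mul_ne_top (ENNReal.natCast_ne_top _)
    (ENNReal.pow_ne_top (ne_top_of_le_ne_top ENNReal.one_ne_top tsub_le_self))
  calc (C * η Set.univ ^ d * w)⁻¹ * (C * (∫⁻ y, g y ∂η) ^ d * w)
      = (∫⁻ y, g y ∂η) ^ d * (C * w) / (η Set.univ ^ d * (C * w)) := by
        rw [ENNReal.div_eq_inv_mul]; ring_nf
    _ = ((η Set.univ)⁻¹ * ∫⁻ y, g y ∂η) ^ d := by
        rw [ENNReal.mul_div_mul_right _ _ hCw0 hCwtop, ENNReal.div_eq_inv_mul, ENNReal.inv_pow,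
          mul_pow]

end Thinning

section Kernel

variable {a b : ℝ}

lemma kfun_nonneg (ha : 0 ≤ a) (hb : 0 ≤ b) (x y : ℝ) : 0 ≤ kfun a b x y :=
  mul_nonneg (abs_nonneg _) (by split_ifs <;> assumption)

lemma kfunMax_nonneg (ha : 0 ≤ a) (φmax : ℝ) : 0 ≤ kfunMax a b φmax :=
  mul_nonneg (le_max_of_le_left ha) (sq_nonneg φmax)

lemma kfun_le_kfunMax (ha : 0 ≤ a) (hb : 0 ≤ b) {φmax x y : ℝ} (hx : |x| ≤ φmax)
    (hy : |y| ≤ φmax) : kfun a b x y ≤ kfunMax a b φmax := by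
  rw [kfun, kfunMax, abs_mul, sq, mul_comm (max a b)]
  refine mul_le_mul (mul_le_mul hx hy (abs_nonneg _) ((abs_nonneg _).trans hx)) ?_
    (by split_ifs <;> assumption) (mul_self_nonneg φmax)
  split_ifs
  exacts [le_max_left a b, le_max_right a b]

lemma kfunMin_le_kfun (ha : 0 ≤ a) (hb : 0 ≤ b) {φmin x y : ℝ} (hφmin : 0 ≤ φmin)
    (hx : φmin ≤ |x|) (hy : φmin ≤ |y|) : kfunMin a b φmin ≤ kfun a b x y := by
  rw [kfun, kfunMin, abs_mul, sq, mul_comm (min a b)]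
  refine mul_le_mul (mul_le_mul hx hy hφmin (abs_nonneg _)) ?_ (le_min ha hb) (by positivity)
  split_ifs
  exacts [min_le_left a b, min_le_right a b]

lemma kfun_mem_Icc (ha : 0 ≤ a) (hb : 0 ≤ b) {φmin φmax x y : ℝ} (hφmin : 0 ≤ φmin)
    (hx : |x| ∈ Set.Icc φmin φmax) (hy : |y| ∈ Set.Icc φmin φmax) :
    kfun a b x y ∈ Set.Icc (kfunMin a b φmin) (kfunMax a b φmax) :=
  ⟨kfunMin_le_kfun ha hb hφmin hx.1 hy.1, kfun_le_kfunMax ha hb hx.2 hy.2⟩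

lemma kfunMin_pos (ha : 0 < a) (hb : 0 < b) {φmin : ℝ} (hφmin : 0 < φmin) :
    0 < kfunMin a b φmin :=
  mul_pos (lt_min ha hb) (by positivity)

lemma measurable_kfun (a b x : ℝ) : Measurable (kfun a b x) :=
  (measurable_const.mul measurable_id).abs.mul <|
    Measurable.ite (measurableSet_lt measurable_const (measurable_const.mul measurable_id))
      measurable_const measurable_const

end Kernel

section TypeLaw

instance isProbabilityMeasure_typeLaw (ν : Measure ℝ) [IsProbabilityMeasure ν] :
    IsProbabilityMeasure (typeLaw ν) :=
  ⟨by simp [typeLaw, Measure.map_apply measurable_neg MeasurableSet.univ,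
    ENNReal.inv_two_add_inv_two]⟩

lemma ae_abs_mem_typeLaw {ν : Measure ℝ} {s : Set ℝ} (hs : MeasurableSet s)
    (h : ∀ᵐ x ∂ν, |x| ∈ s) : ∀ᵐ y ∂typeLaw ν, |y| ∈ s := by
  refine Measure.ae_smul_measure (ae_add_measure_iff.2 ⟨?_, h⟩) _
  rw [ae_map_iff measurable_neg.aemeasurable (measurable_abs hs)]
  simpa only [abs_neg] using h

lemma ae_abs_mem_Icc_typeLaw {φmin φmax : ℝ} {ν : Measure ℝ} (hφmin : 0 ≤ φmin) (hsupp : ∀ᵐ x ∂ν, x ∈ Set.Icc φmin φmax) :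
    ∀ᵐ y ∂typeLaw ν, |y| ∈ Set.Icc φmin φmax :=
  ae_abs_mem_typeLaw measurableSet_Icc <|
    hsupp.mono fun x hx => by rwa [abs_of_nonneg (hφmin.trans hx.1)]

end TypeLaw

section Exploration

variable {a b φmin φmax : ℝ} {ν : Measure ℝ} {n m : ℕ}

/-- The probability that a vertex of type `y` is adjacent to none of the explored vertices. -/
def avoidProb (a b : ℝ) (n : ℕ) {m : ℕ} (x : Fin m → ℝ) (y : ℝ) : ℝ :=
  ∏ i : Fin m, (1 - kfun a b (x i) y / n)

lemma muExplored_eq_mnormalize (a b : ℝ) (ν : Measure ℝ) (n m : ℕ) (x : Fin m → ℝ) :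
    muExplored a b ν n m x
      = mnormalize ((typeLaw ν).withDensity fun y => ENNReal.ofReal (avoidProb a b n x y)) :=
  rfl

lemma measurable_avoidProb (a b : ℝ) (n : ℕ) (x : Fin m → ℝ) : Measurable (avoidProb a b n x) :=
  Finset.measurable_prod _ fun i _ => measurable_const.sub ((measurable_kfun a b (x i)).div_const _)

lemma avoidProb_mem_Icc (ha : 0 ≤ a) (hb : 0 ≤ b) (hn : kfunMax a b φmax ≤ n)
    {x : Fin m → ℝ} (hx : ∀ i, |x i| ≤ φmax) {y : ℝ} (hy : |y| ≤ φmax) :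
    avoidProb a b n x y ∈ Set.Icc ((1 - kfunMax a b φmax / n) ^ m) 1 := by
  simpa [avoidProb] using prod_one_sub_mem_Icc (s := Finset.univ)
    (fun i _ => ⟨div_nonneg (kfun_nonneg ha hb _ _) n.cast_nonneg,
      div_le_div_of_nonneg_right (kfun_le_kfunMax ha hb (hx i) hy) n.cast_nonneg⟩)
    (div_le_one_of_le₀ hn n.cast_nonneg)

lemma ae_avoidProb_mem_Icc (ha : 0 ≤ a) (hb : 0 ≤ b) (hφmin : 0 ≤ φmin)
    (hsupp : ∀ᵐ x ∂ν, x ∈ Set.Icc φmin φmax) (hn : kfunMax a b φmax ≤ n)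
    {x : Fin m → ℝ} (hx : ∀ i, |x i| ≤ φmax) :
    ∀ᵐ y ∂typeLaw ν, avoidProb a b n x y ∈ Set.Icc ((1 - kfunMax a b φmax / n) ^ m) 1 :=
  (ae_abs_mem_Icc_typeLaw hφmin hsupp).mono fun _ hy => avoidProb_mem_Icc ha hb hn hx hy.2

lemma ae_abs_mem_Icc_muExplored (hφmin : 0 ≤ φmin) (hsupp : ∀ᵐ x ∂ν, x ∈ Set.Icc φmin φmax)
    (x : Fin m → ℝ) : ∀ᵐ y ∂muExplored a b ν n m x, |y| ∈ Set.Icc φmin φmax :=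
  (mnormalize_absolutelyContinuous.trans (withDensity_absolutelyContinuous _ _)).ae_le
    (ae_abs_mem_Icc_typeLaw hφmin hsupp)

lemma kernelBiased_mnormalize {μ : Measure ℝ} (h0 : μ Set.univ ≠ 0) (htop : μ Set.univ ≠ ∞)
    (a b x : ℝ) :
    kernelBiased a b (mnormalize μ) x
      = mnormalize (μ.withDensity fun y => ENNReal.ofReal (kfun a b x y)) := by
  rw [kernelBiased, show mnormalize μ = (μ Set.univ)⁻¹ • μ from rfl, withDensity_smul_measure,
    mnormalize_smul (ENNReal.inv_ne_zero.2 htop) (ENNReal.inv_ne_top.2 h0)]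

variable [IsProbabilityMeasure ν]

lemma withDensity_avoidProb_univ_ne_zero_and_ne_top (ha : 0 ≤ a) (hb : 0 ≤ b) (hφmin : 0 ≤ φmin)
    (hsupp : ∀ᵐ x ∂ν, x ∈ Set.Icc φmin φmax) (hn : kfunMax a b φmax < n)
    {x : Fin m → ℝ} (hx : ∀ i, |x i| ≤ φmax) :
    (typeLaw ν).withDensity (fun y => ENNReal.ofReal (avoidProb a b n x y)) Set.univ ≠ 0 ∧
      (typeLaw ν).withDensity (fun y => ENNReal.ofReal (avoidProb a b n x y)) Set.univ ≠ ∞ := by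
  have hn0 : (0 : ℝ) < n := (kfunMax_nonneg ha φmax).trans_lt hn
  exact withDensity_ofReal_univ_ne_zero_and_ne_top
    (pow_pos (sub_pos.2 ((div_lt_one hn0).2 hn)) m)
    (ae_avoidProb_mem_Icc ha hb hφmin hsupp hn.le hx)

lemma isProbabilityMeasure_muExplored (ha : 0 ≤ a) (hb : 0 ≤ b) (hφmin : 0 ≤ φmin)
    (hsupp : ∀ᵐ x ∂ν, x ∈ Set.Icc φmin φmax) (hn : kfunMax a b φmax < n)
    {x : Fin m → ℝ} (hx : ∀ i, |x i| ≤ φmax) :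
    IsProbabilityMeasure (muExplored a b ν n m x) :=
  isProbabilityMeasure_mnormalize
    (withDensity_avoidProb_univ_ne_zero_and_ne_top ha hb hφmin hsupp hn hx).1
    (withDensity_avoidProb_univ_ne_zero_and_ne_top ha hb hφmin hsupp hn hx).2

lemma kernelBiased_muExplored (ha : 0 ≤ a) (hb : 0 ≤ b) (hφmin : 0 ≤ φmin)
    (hsupp : ∀ᵐ x ∂ν, x ∈ Set.Icc φmin φmax) (hn : kfunMax a b φmax < n)
    {x : Fin m → ℝ} (hx : ∀ i, |x i| ≤ φmax) (xu : ℝ) :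
    kernelBiased a b (muExplored a b ν n m x) xu
      = mnormalize ((typeLaw ν).withDensity
          fun y => ENNReal.ofReal (avoidProb a b n x y * kfun a b xu y)) := by
  obtain ⟨h0, htop⟩ := withDensity_avoidProb_univ_ne_zero_and_ne_top ha hb hφmin hsupp hn hx
  rw [muExplored_eq_mnormalize, kernelBiased_mnormalize h0 htop, ← withDensity_mul _
    (measurable_avoidProb a b n x).ennreal_ofReal (measurable_kfun a b xu).ennreal_ofReal]
  simp only [Pi.mul_def, ENNReal.ofReal_mul' (kfun_nonneg ha hb xu _)]

lemma abs_kernelBiased_muExplored_sub_le (ha : 0 < a) (hb : 0 < b) (hφmin : 0 < φmin)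
    (hsupp : ∀ᵐ x ∂ν, x ∈ Set.Icc φmin φmax) (hn : kfunMax a b φmax < n)
    (hmn : 2 * m * kfunMax a b φmax ≤ n) {x : Fin m → ℝ} (hx : ∀ i, |x i| ≤ φmax) {xu : ℝ}
    (hxu : |xu| ∈ Set.Icc φmin φmax) {A : Set ℝ} (hA : MeasurableSet A) :
    |(kernelBiased a b (muExplored a b ν n m x) xu A).toReal
        - (kernelBiased a b (typeLaw ν) xu A).toReal|
      ≤ 4 * kfunMax a b φmax ^ 3 / kfunMin a b φmin ^ 2 * m / n := by
  set kM := kfunMax a b φmax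
  have hn0 : (0 : ℝ) < n := (kfunMax_nonneg ha.le φmax).trans_lt hn
  have hkMn : kM / n ≤ 1 := (div_le_one hn0).2 hn.le
  have hρ : ∀ᵐ y ∂typeLaw ν, avoidProb a b n x y ∈ Set.Icc (1 - m * kM / n) 1 := by
    filter_upwards [ae_avoidProb_mem_Icc ha.le hb.le hφmin.le hsupp hn.le hx] with y hy
    refine ⟨le_trans ?_ hy.1, hy.2⟩
    simpa [mul_div_assoc, sub_eq_add_neg] using one_add_mul_le_pow (a := -(kM / n)) (by linarith) m
  have hκ : ∀ᵐ y ∂typeLaw ν, kfun a b xu y ∈ Set.Icc (kfunMin a b φmin) kM :=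
    (ae_abs_mem_Icc_typeLaw hφmin.le hsupp).mono fun y hy =>
      kfun_mem_Icc ha.le hb.le hφmin.le hxu hy
  rw [kernelBiased_muExplored ha.le hb.le hφmin.le hsupp hn hx]
  refine (abs_mnormalize_withDensity_mul_sub_le (measurable_kfun a b xu)
    (measurable_avoidProb a b n x) (kfunMin_pos ha hb hφmin) ?_ hκ hρ hA).trans_eq (by ring)
  rw [div_le_iff₀ hn0]
  linarith

lemma exists_abs_kernelBiased_muExplored_sub_le (ha : 0 < a) (hb : 0 < b) (hφmin : 0 < φmin)
    (hsupp : ∀ᵐ x ∂ν, x ∈ Set.Icc φmin φmax) (m : ℕ) :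
    ∃ N : ℕ, ∀ n : ℕ, N ≤ n →
      ∀ x : Fin m → ℝ, (∀ i, |x i| ∈ Set.Icc φmin φmax) →
      ∀ xu : ℝ, |xu| ∈ Set.Icc φmin φmax →
      ∀ A : Set ℝ, MeasurableSet A →
        |(kernelBiased a b (muExplored a b ν n m x) xu A).toReal
            - (kernelBiased a b (typeLaw ν) xu A).toReal|
          ≤ 4 * kfunMax a b φmax ^ 3 / kfunMin a b φmin ^ 2 * m / n := by
  refine ⟨⌊(2 * m + 1) * kfunMax a b φmax⌋₊ + 1, fun n hn x hx xu hxu A hA => ?_⟩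
  have hlt : (2 * m + 1) * kfunMax a b φmax < n :=
    (Nat.lt_floor_add_one _).trans_le (by exact_mod_cast hn)
  have hkM : 0 ≤ kfunMax a b φmax := kfunMax_nonneg ha.le φmax
  exact abs_kernelBiased_muExplored_sub_le ha hb hφmin hsupp (by nlinarith) (by nlinarith)
    (fun i => (hx i).2) hxu hA

end Exploration

theorem stmt8_general
    (a b φmin φmax : ℝ) (ha : 0 < a) (hb : 0 < b)
    (hφmin : 0 < φmin)
    (ν : Measure ℝ) (hν : IsProbabilityMeasure ν)
    (hsupp : ∀ᵐ x ∂ν, x ∈ Set.Icc φmin φmax)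
    (n m k : ℕ) (hkn : kfunMax a b φmax < n)
    (x : Fin m → ℝ) (hx : ∀ i, |x i| ∈ Set.Icc φmin φmax)
    (xu : ℝ) (hxu : |xu| ∈ Set.Icc φmin φmax)
    (Ω : Type) [MeasurableSpace Ω] (P : Measure Ω)
    (Y : Fin k → Ω → ℝ) (e : Fin k → Ω → Bool)
    (hYmeas : ∀ j, Measurable (Y j)) (hemeas : ∀ j, Measurable (e j))
    (hindep : iIndepFun (β := fun _ : Fin k => ℝ × Bool)
      (fun j ω => (Y j ω, e j ω)) P)
    (hlaw : ∀ j : Fin k, ∀ B : Set ℝ, MeasurableSet B →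
      P {ω | Y j ω ∈ B ∧ e j ω = true}
        = ∫⁻ y in B, ENNReal.ofReal (kfun a b xu y / n) ∂(muExplored a b ν n m x)) :
    -- conditionally on `D = d`, the neighbour types are i.i.d. `μ*^{(m)}_{x_u}`
    (∀ d : ℕ, d ≤ k → ∀ f : ℝ → ℝ, Measurable f → (∀ y, 0 ≤ f y) →
      ∫⁻ ω, ∏ j ∈ Finset.univ.filter (fun j : Fin k => e j ω = true),
          ENNReal.ofReal (Real.exp (-(f (Y j ω))))
          ∂(P[|{ω | (Finset.univ.filter fun j : Fin k => e j ω = true).card = d}])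
        = (∫⁻ y, ENNReal.ofReal (Real.exp (-(f y)))
            ∂(kernelBiased a b (muExplored a b ν n m x) xu)) ^ d) ∧
    -- total variation bound between `μ*^{(m)}_x` and `μ*_x`
    (∀ m' : ℕ, ∃ N : ℕ, ∀ n' : ℕ, N ≤ n' →
      ∀ x' : Fin m' → ℝ, (∀ i, |x' i| ∈ Set.Icc φmin φmax) →
      ∀ xu' : ℝ, |xu'| ∈ Set.Icc φmin φmax →
      ∀ A : Set ℝ, MeasurableSet A →
        |(kernelBiased a b (muExplored a b ν n' m' x') xu' A).toReal
            - (kernelBiased a b (typeLaw ν) xu' A).toReal|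
          ≤ 4 * kfunMax a b φmax ^ 3 / kfunMin a b φmin ^ 2 * m' / n') := by
  refine ⟨fun d hd f hf _ => ?_, exists_abs_kernelBiased_muExplored_sub_le ha hb hφmin hsupp⟩
  have hP := hindep.isProbabilityMeasure
  have hμm := isProbabilityMeasure_muExplored ha.le hb.le hφmin.le hsupp hkn fun i => (hx i).2
  have hn0 : (0 : ℝ) < n := (kfunMax_nonneg ha.le φmax).trans_lt hkn
  set η := (muExplored a b ν n m x).withDensity fun y => ENNReal.ofReal (kfun a b xu y / n)
  have hη (j : Fin k) : (P.restrict {ω | e j ω = true}).map (Y j) = η := by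
    ext B hB
    rw [Measure.map_apply (hYmeas j) hB, Measure.restrict_apply (hYmeas j hB),
      withDensity_apply _ hB, ← hlaw j B hB]
    rfl
  have hη1 : η Set.univ < 1 := by
    refine (withDensity_ofReal_univ_mem_Icc (c := 0) (C := kfunMax a b φmax / n) ?_).2.trans_lt
      (ENNReal.ofReal_lt_one.2 ((div_lt_one hn0).2 hkn))
    filter_upwards [ae_abs_mem_Icc_muExplored hφmin.le hsupp x] with y hy
    exact ⟨div_nonneg (kfun_nonneg ha.le hb.le xu y) hn0.le,
      div_le_div_of_nonneg_right (kfun_le_kfunMax ha.le hb.le hxu.2 hy.2) hn0.le⟩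
  rw [kernelBiased, ← mnormalize_withDensity_ofReal_div (measurable_kfun a b xu) hn0]
  exact lintegral_prod_cond_card_eq hYmeas hemeas hindep hη hη1 hf.neg.exp.ennreal_ofReal
    (by simpa using hd)

/-- **Conditionally on their number, the types of the newly discovered neighbours are i.i.d.
with law `μ*^{(m)}_x`, which is close to `μ*_x`.**
In the exploration process of the DC-PPM, suppose the vertex `u` currently being explored has
type `x_u`; the unexplored vertices have i.i.d. types with law `μ^{(m)}` and are joined to `u`
independently with conditional probability `κ(x_u, ·)/n`.  Let `D` be the number of neighbours
of `u` among them.  Then, conditionally on `D = d`, the types of these `d` neighbours are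
i.i.d. with law `μ*^{(m)}_{x_u}` given by `dμ*^{(m)}_{x_u}(y) ∝ κ(x_u,y)·dμ^{(m)}(y)` (this is
expressed, as in the proof, through the Laplace functional: for every measurable `f ≥ 0`,
`E[∏_{j : u∼j} e^{-f(Y_j)} | D = d] = (∫ e^{-f} dμ*^{(m)}_{x_u})^d`).  Moreover, with `N_m` as
in the reservoir lemma, for `n ≥ N_m` the total variation distance between `μ*^{(m)}_x` and
`μ*_x` is at most `4·(κ_max³/κ_min²)·(m/n)`. -/
theorem stmt8
    (a b φmin φmax : ℝ) (ha : 0 < a) (hb : 0 < b)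
    (hφmin : 0 < φmin) (hφ : φmin ≤ φmax)
    (ν : Measure ℝ) (hν : IsProbabilityMeasure ν)
    (hsupp : ∀ᵐ x ∂ν, x ∈ Set.Icc φmin φmax)
    (n m k : ℕ) (hkn : kfunMax a b φmax < n)
    (x : Fin m → ℝ) (hx : ∀ i, |x i| ∈ Set.Icc φmin φmax)
    (xu : ℝ) (hxu : |xu| ∈ Set.Icc φmin φmax)
    (Ω : Type) [MeasurableSpace Ω] (P : Measure Ω) (hP : IsProbabilityMeasure P)
    (Y : Fin k → Ω → ℝ) (e : Fin k → Ω → Bool)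
    (hYmeas : ∀ j, Measurable (Y j)) (hemeas : ∀ j, Measurable (e j))
    (hindep : iIndepFun (β := fun _ : Fin k => ℝ × Bool)
      (fun j ω => (Y j ω, e j ω)) P)
    (hYlaw : ∀ j, Measure.map (Y j) P = muExplored a b ν n m x)
    (hlaw : ∀ j : Fin k, ∀ B : Set ℝ, MeasurableSet B →
      P {ω | Y j ω ∈ B ∧ e j ω = true}
        = ∫⁻ y in B, ENNReal.ofReal (kfun a b xu y / n) ∂(muExplored a b ν n m x)) :
    -- conditionally on `D = d`, the neighbour types are i.i.d. `μ*^{(m)}_{x_u}`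
    (∀ d : ℕ, d ≤ k → ∀ f : ℝ → ℝ, Measurable f → (∀ y, 0 ≤ f y) →
      ∫⁻ ω, ∏ j ∈ Finset.univ.filter (fun j : Fin k => e j ω = true),
          ENNReal.ofReal (Real.exp (-(f (Y j ω))))
          ∂(P[|{ω | (Finset.univ.filter fun j : Fin k => e j ω = true).card = d}])
        = (∫⁻ y, ENNReal.ofReal (Real.exp (-(f y)))
            ∂(kernelBiased a b (muExplored a b ν n m x) xu)) ^ d) ∧
    -- total variation bound between `μ*^{(m)}_x` and `μ*_x`
    (∀ m' : ℕ, ∃ N : ℕ, ∀ n' : ℕ, N ≤ n' →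
      ∀ x' : Fin m' → ℝ, (∀ i, |x' i| ∈ Set.Icc φmin φmax) →
      ∀ xu' : ℝ, |xu'| ∈ Set.Icc φmin φmax →
      ∀ A : Set ℝ, MeasurableSet A →
        |(kernelBiased a b (muExplored a b ν n' m' x') xu' A).toReal
            - (kernelBiased a b (typeLaw ν) xu' A).toReal|
          ≤ 4 * kfunMax a b φmax ^ 3 / kfunMin a b φmin ^ 2 * m' / n') :=
  stmt8_general a b φmin φmax ha hb hφmin ν hν hsupp n m k hkn x hx xu hxu Ω P Y e hYmeas hemeas
    hindep hlaw
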